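/- arXiv:2306.05037 — 5 statements merged into one kernel-verified Lean document; each statement's English description precedes it below -/
import Mathlib

section
/- If f, g : ℝⁿ → ℝᵐ are both normalization-equivariant and f(x) = g(x) for every x in the intersection S ∩ Span(1ₙ)^⊥ of the Euclidean unit sphere with the orthogonal complement of Span(1ₙ), then f = g. -/
/-- The all-ones vector of `ℝᵏ`. -/
def allOnes (k : ℕ) : EuclideanSpace ℝ (Fin k) := WithLp.toLp 2 (fun _ => (1 : ℝ))

/-- `f : ℝⁿ → ℝᵐ` is scale-equivariant if `f (λ • x) = λ • f x` for all `x` and all `λ > 0`. -/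
def ScaleEquivariant {n m : ℕ} (f : EuclideanSpace ℝ (Fin n) → EuclideanSpace ℝ (Fin m)) : Prop :=
  ∀ (x : EuclideanSpace ℝ (Fin n)) (l : ℝ), 0 < l → f (l • x) = l • f x

/-- `f : ℝⁿ → ℝᵐ` is shift-equivariant if `f (x + μ • 1ₙ) = f x + μ • 1ₘ`
for all `x` and all `μ ∈ ℝ`. -/
def ShiftEquivariant {n m : ℕ} (f : EuclideanSpace ℝ (Fin n) → EuclideanSpace ℝ (Fin m)) : Prop :=
  ∀ (x : EuclideanSpace ℝ (Fin n)) (μ : ℝ), f (x + μ • allOnes n) = f x + μ • allOnes m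

/-- `f` is normalization-equivariant if it is both scale- and shift-equivariant. -/
def NormalizationEquivariant {n m : ℕ}
    (f : EuclideanSpace ℝ (Fin n) → EuclideanSpace ℝ (Fin m)) : Prop :=
  ScaleEquivariant f ∧ ShiftEquivariant f

/-- Two normalization-equivariant functions agreeing on the intersection of the Euclidean
unit sphere with the orthogonal complement of `Span(1ₙ)` are equal. -/
theorem normalizationEquivariant_eq_of_eqOn {n m : ℕ} (hn : 1 ≤ n) (hm : 1 ≤ m)
    (f g : EuclideanSpace ℝ (Fin n) → EuclideanSpace ℝ (Fin m))
    (hf : NormalizationEquivariant f) (hg : NormalizationEquivariant g)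
    (h : ∀ x : EuclideanSpace ℝ (Fin n), ‖x‖ = 1 → (∑ i, x i) = 0 → f x = g x) : f = g := by
  obtain ⟨hfs, hft⟩ := hf
  obtain ⟨hgs, hgt⟩ := hg
  have zero_of_scale : ∀ (F : EuclideanSpace ℝ (Fin n) → EuclideanSpace ℝ (Fin m)),
      ScaleEquivariant F → F 0 = 0 := by
    intro F hF
    have h2 := hF 0 2 (by norm_num)
    rw [smul_zero, two_smul] at h2
    nth_rewrite 1 [← add_zero (F 0)] at h2
    exact (add_left_cancel h2).symm
  have key : ∀ z : EuclideanSpace ℝ (Fin n), (∑ i, z i) = 0 → f z = g z := by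
    intro z hz
    by_cases hz0 : z = 0
    · rw [hz0, zero_of_scale f hfs, zero_of_scale g hgs]
    · set c : ℝ := ‖z‖ with hc
      have hcpos : 0 < c := norm_pos_iff.mpr hz0
      set u : EuclideanSpace ℝ (Fin n) := c⁻¹ • z with hu
      have hcu : c • u = z := by
        rw [hu, smul_smul, mul_inv_cancel₀ hcpos.ne', one_smul]
      have hunorm : ‖u‖ = 1 := by
        rw [hu, norm_smul, norm_inv, norm_norm, ← hc, inv_mul_cancel₀ hcpos.ne']
      have husum : (∑ i, u i) = 0 := by
        have : ∀ i, u i = c⁻¹ * z i := fun i => rfl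
        simp only [this, ← Finset.mul_sum, hz, mul_zero]
      calc f z = f (c • u) := by rw [hcu]
        _ = c • f u := hfs u c hcpos
        _ = c • g u := by rw [h u hunorm husum]
        _ = g (c • u) := (hgs u c hcpos).symm
        _ = g z := by rw [hcu]
  funext x
  set μ : ℝ := (∑ i, x i) / n with hμ
  set y : EuclideanSpace ℝ (Fin n) := x - μ • allOnes n with hy
  have hxy : x = y + μ • allOnes n := by rw [hy, sub_add_cancel]
  have hysum : (∑ i, y i) = 0 := by
    have hyi : ∀ i, y i = x i - μ := by
      intro i
      simp [hy, allOnes]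
    simp only [hyi, Finset.sum_sub_distrib, Finset.sum_const, Finset.card_univ,
      Fintype.card_fin, nsmul_eq_mul, hμ]
    have hn0 : (n : ℝ) ≠ 0 := Nat.cast_ne_zero.mpr (by omega)
    field_simp
    ring
  rw [hxy, hft y μ, hgt y μ, key y hysum]
end

section
/- For every function g defined on S ∩ Span(1ₙ)^⊥ (the intersection of the Euclidean unit sphere of ℝⁿ with the orthogonal complement of Span(1ₙ)) with values in ℝᵐ, there exists a normalization-equivariant function f : ℝⁿ → ℝᵐ such that f(x) = g(x) for all x ∈ S ∩ Span(1ₙ)^⊥. (Explicitly, writing the orthogonal decomposition x = x₁ + c(x)•1ₙ with x₁ ∈ Span(1ₙ)^⊥, the function f(x) = ‖x₁‖ • g(x₁/‖x₁‖) + c(x)•1ₘ if x₁ ≠ 0 and f(x) = c(x)•1ₘ otherwise, works.) -/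
/-- mean of coordinates -/
noncomputable def meanC {n : ℕ} (x : EuclideanSpace ℝ (Fin n)) : ℝ := (∑ i, x i) / n

/-- projection onto Span(1)^⊥ -/
noncomputable def projC {n : ℕ} (x : EuclideanSpace ℝ (Fin n)) : EuclideanSpace ℝ (Fin n) :=
  x - meanC x • allOnes n

lemma sum_smul' {n : ℕ} (l : ℝ) (x : EuclideanSpace ℝ (Fin n)) :
    (∑ i, (l • x) i) = l * ∑ i, x i := by
  simp [Finset.mul_sum]

lemma sum_add' {n : ℕ} (x : EuclideanSpace ℝ (Fin n)) (μ : ℝ) :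
    (∑ i, (x + μ • allOnes n) i) = (∑ i, x i) + μ * n := by
  simp [allOnes, Finset.sum_add_distrib, mul_comm]

lemma meanC_smul {n : ℕ} (l : ℝ) (x : EuclideanSpace ℝ (Fin n)) :
    meanC (l • x) = l * meanC x := by
  unfold meanC
  rw [sum_smul', mul_div_assoc]

lemma meanC_shift {n : ℕ} (hn : 1 ≤ n) (x : EuclideanSpace ℝ (Fin n)) (μ : ℝ) :
    meanC (x + μ • allOnes n) = meanC x + μ := by
  have hn0 : (n : ℝ) ≠ 0 := by positivity
  unfold meanC
  rw [sum_add', add_div, mul_div_assoc, div_self hn0, mul_one]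

lemma projC_smul {n : ℕ} (l : ℝ) (x : EuclideanSpace ℝ (Fin n)) :
    projC (l • x) = l • projC x := by
  simp [projC, meanC_smul, smul_sub, mul_smul]

lemma projC_shift {n : ℕ} (hn : 1 ≤ n) (x : EuclideanSpace ℝ (Fin n)) (μ : ℝ) :
    projC (x + μ • allOnes n) = projC x := by
  simp [projC, meanC_shift hn, add_smul]

lemma normalize_smul {n : ℕ} (l : ℝ) (hl : 0 < l) (v : EuclideanSpace ℝ (Fin n)) :
    ‖l • v‖⁻¹ • (l • v) = ‖v‖⁻¹ • v := by
  rcases eq_or_ne v 0 with rfl | hv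
  · simp
  · have hv' : ‖v‖ ≠ 0 := norm_ne_zero_iff.mpr hv
    rw [norm_smul, smul_smul, Real.norm_eq_abs, abs_of_pos hl, mul_inv]
    congr 1
    field_simp

/-- Any prescription of values on `S ∩ Span(1ₙ)^⊥` (unit vectors whose coordinates sum
to `0`) extends to a normalization-equivariant function on `ℝⁿ`. -/
theorem exists_normalizationEquivariant_extension {n m : ℕ} (hn : 1 ≤ n) (hm : 1 ≤ m)
    (g : EuclideanSpace ℝ (Fin n) → EuclideanSpace ℝ (Fin m)) :
    ∃ f : EuclideanSpace ℝ (Fin n) → EuclideanSpace ℝ (Fin m),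
      NormalizationEquivariant f ∧
        ∀ x : EuclideanSpace ℝ (Fin n), ‖x‖ = 1 → (∑ i, x i) = 0 → f x = g x := by
  refine ⟨fun x => ‖projC x‖ • g (‖projC x‖⁻¹ • projC x) + meanC x • allOnes m, ⟨?_, ?_⟩, ?_⟩
  · intro x l hl
    dsimp only
    rw [projC_smul, meanC_smul, normalize_smul l hl, norm_smul, Real.norm_eq_abs,
      abs_of_pos hl, mul_smul, mul_smul, smul_add]
  · intro x μ
    dsimp only
    simp only [projC_shift hn, meanC_shift hn, add_smul]
    abel
  · intro x hx hs
    have h0 : meanC x = 0 := by simp [meanC, hs]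
    have hp : projC x = x := by simp [projC, h0]
    simp [hp, h0, hx]
end

section
/- For any fixed reals a < b and any function f : ℝⁿ → ℝᵐ, the conjugated map T_{a,b}⁻¹ ∘ f ∘ T_{a,b} is normalization-equivariant on nonconstant inputs: defining g(x) = ((max(x) − min(x))/(b − a)) • (f(T_{a,b}(x)) − a•1ₘ) + min(x)•1ₘ, where T_{a,b}(x) = (b − a) • (x − min(x)•1ₙ)/(max(x) − min(x)) + a•1ₙ, one has g(λ•x + μ•1ₙ) = λ • g(x) + μ•1ₘ for every x ∈ ℝⁿ with max(x) > min(x), every real λ > 0 and every μ ∈ ℝ. -/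
/-- Largest coordinate of a vector of `ℝⁿ`, `n ≥ 1`. -/
def vmax {n : ℕ} (hn : 0 < n) (x : Fin n → ℝ) : ℝ :=
  Finset.univ.sup' ⟨⟨0, hn⟩, Finset.mem_univ _⟩ x

/-- Smallest coordinate of a vector of `ℝⁿ`, `n ≥ 1`. -/
def vmin {n : ℕ} (hn : 0 < n) (x : Fin n → ℝ) : ℝ :=
  Finset.univ.inf' ⟨⟨0, hn⟩, Finset.mem_univ _⟩ x

/-- The min–max normalization map `T_{a,b}` sending `x` to
`(b - a) • (x - min(x)•1ₙ) / (max(x) - min(x)) + a•1ₙ`. -/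
noncomputable def minMaxNormalize {n : ℕ} (hn : 0 < n) (a b : ℝ) (x : Fin n → ℝ) :
    Fin n → ℝ :=
  fun i => (b - a) * (x i - vmin hn x) / (vmax hn x - vmin hn x) + a

/-- The conjugated map `T_{a,b}⁻¹ ∘ f ∘ T_{a,b}`, explicitly
`g(x) = ((max(x) − min(x))/(b − a)) • (f(T_{a,b}(x)) − a•1ₘ) + min(x)•1ₘ`. -/
noncomputable def conjugated {n m : ℕ} (hn : 0 < n) (a b : ℝ)
    (f : (Fin n → ℝ) → (Fin m → ℝ)) (x : Fin n → ℝ) : Fin m → ℝ :=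
  fun j => (vmax hn x - vmin hn x) / (b - a) * (f (minMaxNormalize hn a b x) j - a)
    + vmin hn x

/-! The map `t ↦ l * t + μ` with `l > 0` is monotone, so it commutes with the max and min of the
coordinates. Hence the affine change of variables cancels inside the normalization `T_{a,b}`, and
what remains outside is the scale `max - min` and the offset `min`, both of which transform
affinely. -/

section Affine

variable {n : ℕ} (hn : 0 < n)

lemma vmax_comp_of_monotone {f : ℝ → ℝ} (hf : Monotone f) (x : Fin n → ℝ) :
    vmax hn (f ∘ x) = f (vmax hn x) :=
  (Finset.apply_sup'_eq_sup'_comp _ f fun _ _ => hf.map_max).symm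

lemma vmin_comp_of_monotone {f : ℝ → ℝ} (hf : Monotone f) (x : Fin n → ℝ) :
    vmin hn (f ∘ x) = f (vmin hn x) :=
  (Finset.apply_inf'_eq_inf'_comp _ f fun _ _ => hf.map_min).symm

lemma vmax_mul_add {l : ℝ} (hl : 0 ≤ l) (μ : ℝ) (x : Fin n → ℝ) :
    vmax hn (fun i => l * x i + μ) = l * vmax hn x + μ :=
  vmax_comp_of_monotone hn (f := fun t => l * t + μ) (fun _ _ h => by dsimp; gcongr) x

lemma vmin_mul_add {l : ℝ} (hl : 0 ≤ l) (μ : ℝ) (x : Fin n → ℝ) :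
    vmin hn (fun i => l * x i + μ) = l * vmin hn x + μ :=
  vmin_comp_of_monotone hn (f := fun t => l * t + μ) (fun _ _ h => by dsimp; gcongr) x

lemma minMaxNormalize_mul_add {l : ℝ} (hl : 0 < l) (μ : ℝ) (x : Fin n → ℝ) (a b : ℝ) :
    minMaxNormalize hn a b (fun i => l * x i + μ) = minMaxNormalize hn a b x := by
  funext i
  simp only [minMaxNormalize, vmax_mul_add hn hl.le, vmin_mul_add hn hl.le,
    add_sub_add_right_eq_sub, ← mul_sub, mul_left_comm (b - a) l, mul_div_mul_left _ _ hl.ne']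

end Affine

theorem conjugated_normalization_equivariant_general {n m : ℕ} (hn : 0 < n)
    (a b : ℝ) (f : (Fin n → ℝ) → (Fin m → ℝ))
    (x : Fin n → ℝ) (l μ : ℝ) (hl : 0 < l) :
    conjugated hn a b f (l • x + μ • (fun _ => (1 : ℝ)))
      = l • conjugated hn a b f x + μ • (fun _ => (1 : ℝ)) := by
  have hy : l • x + μ • (fun _ => (1 : ℝ)) = fun i => l * x i + μ := by
    funext i; simp
  funext j
  simp only [conjugated, hy, minMaxNormalize_mul_add hn hl μ x, vmax_mul_add hn hl.le,
    vmin_mul_add hn hl.le, Pi.add_apply, Pi.smul_apply, smul_eq_mul, mul_one]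
  ring

/-- For any `a < b` and any `f : ℝⁿ → ℝᵐ`, the conjugated map `T_{a,b}⁻¹ ∘ f ∘ T_{a,b}`
is normalization-equivariant on nonconstant inputs. -/
theorem conjugated_normalization_equivariant {n m : ℕ} (hn : 0 < n) (hm : 0 < m)
    (a b : ℝ) (hab : a < b) (f : (Fin n → ℝ) → (Fin m → ℝ))
    (x : Fin n → ℝ) (hx : vmin hn x < vmax hn x) (l μ : ℝ) (hl : 0 < l) :
    conjugated hn a b f (l • x + μ • (fun _ => (1 : ℝ)))
      = l • conjugated hn a b f x + μ • (fun _ => (1 : ℝ)) :=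
  conjugated_normalization_equivariant_general hn a b f x l μ hl
end

section
/- The only normalization-equivariant function from ℝ to ℝ is the identity: if φ : ℝ → ℝ satisfies φ(λx + μ) = λ·φ(x) + μ for all x ∈ ℝ, all real λ > 0 and all μ ∈ ℝ, then φ(x) = x for all x. In particular, there is no nonlinear element-wise activation function preserving normalization-equivariance. -/
/-- The only normalization-equivariant function from `ℝ` to `ℝ` is the identity. -/
theorem normalizationEquivariant_real_eq_id (φ : ℝ → ℝ)
    (hφ : ∀ (x l μ : ℝ), 0 < l → φ (l * x + μ) = l * φ x + μ) :
    ∀ x : ℝ, φ x = x := by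
  have map_zero : φ 0 = 0 := by
    have h := hφ 0 2 0 two_pos
    simp only [mul_zero, add_zero] at h
    linarith
  intro x
  simpa [map_zero] using hφ 0 1 x one_pos
end

section
/- The NL-Ridge objective with affine constraints rescales equivariantly: let Z ∈ ℝ^{n×k}, let J ∈ ℝ^{n×k} be the all-ones matrix, let h : ℝ^{k×k} → ℝ be any function, and let Θ ∈ ℝ^{k×k} satisfy Θᵀ1ₖ = 1ₖ (each column of Θ sums to 1, i.e., Θ encodes affine combinations of patches). Then for all real λ > 0, μ ∈ ℝ and σ ∈ ℝ: ‖(λZ + μJ)Θ − (λZ + μJ)‖_F² + n(λσ)²·h(Θ) = λ²·( ‖ZΘ − Z‖_F² + nσ²·h(Θ) ), where ‖·‖_F is the Frobenius norm. Consequently, the affine-constrained minimizers of NL-Ridge are normalization-invariant. -/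
/-- The Frobenius norm of a real matrix. -/
noncomputable def frobNorm {n k : ℕ} (M : Matrix (Fin n) (Fin k) ℝ) : ℝ :=
  Real.sqrt (∑ i, ∑ j, (M i j) ^ 2)

/-- The all-ones `n × k` matrix. -/
def allOnesMatrix (n k : ℕ) : Matrix (Fin n) (Fin k) ℝ := Matrix.of fun _ _ => (1 : ℝ)

lemma frobNorm_smul {n k : ℕ} (c : ℝ) (M : Matrix (Fin n) (Fin k) ℝ) :
    frobNorm (c • M) = |c| * frobNorm M := by
  have hsum : ∑ i, ∑ j, ((c • M) i j) ^ 2 = c ^ 2 * ∑ i, ∑ j, (M i j) ^ 2 := by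
    simp only [Matrix.smul_apply, smul_eq_mul, mul_pow, Finset.mul_sum]
  rw [frobNorm, hsum, Real.sqrt_mul (sq_nonneg c), Real.sqrt_sq_eq_abs, frobNorm]

lemma allOnesMatrix_mul_of_transpose_mulVec_one {n k : ℕ} {Θ : Matrix (Fin k) (Fin k) ℝ}
    (hΘ : Θ.transpose.mulVec (fun _ => (1 : ℝ)) = fun _ => (1 : ℝ)) :
    allOnesMatrix n k * Θ = allOnesMatrix n k := by
  ext i j
  simpa [allOnesMatrix, Matrix.mul_apply, Matrix.mulVec, dotProduct] using congrFun hΘ j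

theorem nlridge_objective_rescales_general {n k : ℕ} (Z : Matrix (Fin n) (Fin k) ℝ)
    (h : Matrix (Fin k) (Fin k) ℝ → ℝ) (Θ : Matrix (Fin k) (Fin k) ℝ)
    (hΘ : Θ.transpose.mulVec (fun _ => (1 : ℝ)) = fun _ => (1 : ℝ))
    (l μ σ : ℝ) :
    frobNorm ((l • Z + μ • allOnesMatrix n k) * Θ - (l • Z + μ • allOnesMatrix n k)) ^ 2
      + n * (l * σ) ^ 2 * h Θ
    = l ^ 2 * (frobNorm (Z * Θ - Z) ^ 2 + n * σ ^ 2 * h Θ) := by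
  have hshift : (l • Z + μ • allOnesMatrix n k) * Θ - (l • Z + μ • allOnesMatrix n k)
      = l • (Z * Θ - Z) := by
    rw [Matrix.add_mul, Matrix.smul_mul, Matrix.smul_mul,
      allOnesMatrix_mul_of_transpose_mulVec_one hΘ, smul_sub]
    abel
  rw [hshift, frobNorm_smul, mul_pow, sq_abs]
  ring

/-- The NL-Ridge objective with affine constraints rescales equivariantly: if every
column of `Θ` sums to `1`, then for `λ > 0`,
`‖(λZ + μJ)Θ − (λZ + μJ)‖_F² + n(λσ)²·h(Θ) = λ²·(‖ZΘ − Z‖_F² + nσ²·h(Θ))`. -/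
theorem nlridge_objective_rescales {n k : ℕ} (Z : Matrix (Fin n) (Fin k) ℝ)
    (h : Matrix (Fin k) (Fin k) ℝ → ℝ) (Θ : Matrix (Fin k) (Fin k) ℝ)
    (hΘ : Θ.transpose.mulVec (fun _ => (1 : ℝ)) = fun _ => (1 : ℝ))
    (l μ σ : ℝ) (hl : 0 < l) :
    frobNorm ((l • Z + μ • allOnesMatrix n k) * Θ - (l • Z + μ • allOnesMatrix n k)) ^ 2
      + n * (l * σ) ^ 2 * h Θ
    = l ^ 2 * (frobNorm (Z * Θ - Z) ^ 2 + n * σ ^ 2 * h Θ) :=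
  nlridge_objective_rescales_general Z h Θ hΘ l μ σ
end
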